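/- arXiv:2602.08000 — 3 statements merged into one kernel-verified Lean document; each statement's English description precedes it below -/
import Mathlib

section
/- Let (Z_t)_{t≥0} be a finite-state Markov chain with stationary distribution d_Z and let g : Z → R^d satisfy ∫ g d(d_Z) = 0 and ‖g(z)‖ ≤ σ for all z. Suppose the cumulative total-variation deviation satisfies ∑_{t=0}^{T−1} ‖P^t(z,·) − d_Z‖_TV ≤ C₁ for all z and T. Then for all N ≥ 1, E‖(1/N)∑_{t=0}^{N−1} g(Z_t)‖² ≤ 16 C₁² σ² / N. -/
/-!
Expand `‖∑_{t<N} g(Z_t)‖² ≤ 2 ∑_s ⟪g(Z_s), ∑_{s ≤ t < N} g(Z_t)⟫`. Conditioning on `F_s`, the Markov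
property replaces the inner sum by `∑_k (P^k g)(Z_s)`. Since `g` is centred under `dZ`,
`(P^k g)(z) = ∑_u (P^k(z,u) - dZ u) • g u` has norm at most `2σ ‖P^k(z,·) - dZ‖_TV`, so the
cumulative TV bound gives `‖∑_k (P^k g)(z)‖ ≤ 2σC₁`; the case `k = 0` alone gives `‖g z‖ ≤ 2σC₁`.
Hence each of the `N` terms is at most `(2σC₁)²`, and `E‖∑ g(Z_t)‖² ≤ 8σ²C₁²N`.
-/

open MeasureTheory Finset
open scoped RealInnerProductSpace

section TransitionOp

variable {S E : Type*} [Fintype S] [NormedAddCommGroup E] [InnerProductSpace ℝ E]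

/-- `(P f) z = ∑ u, P z u • f u`, i.e. `E[f(Z_{t+1}) | Z_t = z]` for a chain with transition
matrix `P`. -/
noncomputable def transitionOp (P : Matrix S S ℝ) (f : S → E) : S → E :=
  fun z => ∑ u, P z u • f u

@[simp]
lemma transitionOp_one [DecidableEq S] (f : S → E) : transitionOp 1 f = f := by
  funext z
  simp [transitionOp, Matrix.one_apply, ite_smul]

lemma transitionOp_mul (P Q : Matrix S S ℝ) (f : S → E) :
    transitionOp (P * Q) f = transitionOp P (transitionOp Q f) := by
  funext z
  simp only [transitionOp, Matrix.mul_apply, sum_smul, smul_sum, smul_smul]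
  exact sum_comm

lemma norm_transitionOp_le {Q : Matrix S S ℝ} {π : S → ℝ} {g : S → E} {σ : ℝ}
    (hmean : ∑ u, π u • g u = 0) (hg : ∀ u, ‖g u‖ ≤ σ) (z : S) :
    ‖transitionOp Q g z‖ ≤ σ * ∑ u, |Q z u - π u| := by
  have hcentred : transitionOp Q g z = ∑ u, (Q z u - π u) • g u := by
    simp only [transitionOp, sub_smul, sum_sub_distrib, hmean, sub_zero]
  rw [hcentred, mul_sum]
  refine (norm_sum_le _ _).trans (sum_le_sum fun u _ => ?_)
  rw [norm_smul, Real.norm_eq_abs, mul_comm]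
  exact mul_le_mul_of_nonneg_right (hg u) (abs_nonneg _)

variable [DecidableEq S] {P : Matrix S S ℝ} {π : S → ℝ} {g : S → E} {σ C : ℝ} {z : S}

lemma sum_norm_transitionOp_pow_le (hmean : ∑ u, π u • g u = 0) (hg : ∀ u, ‖g u‖ ≤ σ)
    (hTV : ∀ T, ∑ t ∈ range T, (1 / 2 : ℝ) * ∑ u, |(P ^ t) z u - π u| ≤ C) (T : ℕ) :
    ∑ k ∈ range T, ‖transitionOp (P ^ k) g z‖ ≤ 2 * σ * C := by
  have hσ : 0 ≤ σ := (norm_nonneg _).trans (hg z)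
  calc ∑ k ∈ range T, ‖transitionOp (P ^ k) g z‖
      ≤ ∑ k ∈ range T, 2 * σ * ((1 / 2 : ℝ) * ∑ u, |(P ^ k) z u - π u|) :=
        sum_le_sum fun k _ => (norm_transitionOp_le hmean hg z).trans_eq (by ring)
    _ ≤ 2 * σ * C := by
        rw [← mul_sum]
        exact mul_le_mul_of_nonneg_left (hTV T) (by positivity)

lemma norm_le_of_sum_tv_le (hmean : ∑ u, π u • g u = 0) (hg : ∀ u, ‖g u‖ ≤ σ)
    (hTV : ∀ T, ∑ t ∈ range T, (1 / 2 : ℝ) * ∑ u, |(P ^ t) z u - π u| ≤ C) :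
    ‖g z‖ ≤ 2 * σ * C := by
  simpa using sum_norm_transitionOp_pow_le hmean hg hTV 1

lemma inner_sum_transitionOp_pow_le (hmean : ∑ u, π u • g u = 0) (hg : ∀ u, ‖g u‖ ≤ σ)
    (hTV : ∀ T, ∑ t ∈ range T, (1 / 2 : ℝ) * ∑ u, |(P ^ t) z u - π u| ≤ C) (T : ℕ) :
    ⟪g z, ∑ k ∈ range T, transitionOp (P ^ k) g z⟫ ≤ (2 * σ * C) ^ 2 := by
  have hgz := norm_le_of_sum_tv_le hmean hg hTV
  calc ⟪g z, ∑ k ∈ range T, transitionOp (P ^ k) g z⟫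
      ≤ ‖g z‖ * ‖∑ k ∈ range T, transitionOp (P ^ k) g z‖ := real_inner_le_norm _ _
    _ ≤ (2 * σ * C) * (2 * σ * C) :=
        mul_le_mul hgz ((norm_sum_le _ _).trans (sum_norm_transitionOp_pow_le hmean hg hTV T))
          (norm_nonneg _) ((norm_nonneg _).trans hgz)
    _ = (2 * σ * C) ^ 2 := (sq _).symm

end TransitionOp

section InnerSum

variable {E : Type*} [NormedAddCommGroup E] [InnerProductSpace ℝ E]

lemma norm_sum_range_sq_add_sum_norm_sq (x : ℕ → E) (N : ℕ) :
    ‖∑ t ∈ range N, x t‖ ^ 2 + ∑ t ∈ range N, ‖x t‖ ^ 2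
      = 2 * ∑ s ∈ range N, ⟪x s, ∑ t ∈ Ico s N, x t⟫ := by
  induction N with
  | zero => simp
  | succ N ih =>
    have htail : ∀ s ∈ range N, ∑ t ∈ Ico s (N + 1), x t = ∑ t ∈ Ico s N, x t + x N :=
      fun s hs => sum_Ico_succ_top (mem_range.mp hs).le x
    rw [sum_range_succ, sum_range_succ, sum_range_succ, sum_congr rfl fun s hs =>
      congrArg (⟪x s, ·⟫) (htail s hs)]
    simp only [inner_add_right, sum_add_distrib, ← sum_inner, Nat.Ico_succ_singleton,
      sum_singleton, real_inner_self_eq_norm_sq, norm_add_sq_real]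
    linarith

lemma norm_sum_range_sq_le (x : ℕ → E) (N : ℕ) :
    ‖∑ t ∈ range N, x t‖ ^ 2 ≤ 2 * ∑ s ∈ range N, ⟪x s, ∑ k ∈ range (N - s), x (s + k)⟫ := by
  have h := norm_sum_range_sq_add_sum_norm_sq x N
  simp only [sum_Ico_eq_sum_range] at h
  have : 0 ≤ ∑ t ∈ range N, ‖x t‖ ^ 2 := sum_nonneg fun t _ => sq_nonneg _
  linarith

end InnerSum

lemma integral_inner_condExp {Ω E : Type*} [NormedAddCommGroup E] [InnerProductSpace ℝ E]
    [CompleteSpace E] {m m₀ : MeasurableSpace Ω} {μ : Measure Ω} [IsFiniteMeasure μ]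
    (hm : m ≤ m₀) {X Y : Ω → E} (hX : StronglyMeasurable[m] X)
    (hXY : Integrable (fun ω => ⟪X ω, Y ω⟫) μ) (hY : Integrable Y μ) :
    ∫ ω, ⟪X ω, Y ω⟫ ∂μ = ∫ ω, ⟪X ω, μ[Y | m] ω⟫ ∂μ := by
  rw [← integral_condExp hm]
  exact integral_congr_ae (condExp_bilin_of_stronglyMeasurable_left (innerSL ℝ) hX hXY hY)

section MarkovChain

variable {S Ω E : Type*} [Fintype S] [MeasurableSpace S] [MeasurableSingletonClass S]
  [NormedAddCommGroup E] [InnerProductSpace ℝ E]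
  {m : MeasurableSpace Ω} {μ : Measure Ω} [IsFiniteMeasure μ]
  {P : Matrix S S ℝ} {F : Filtration ℕ m} {Z : ℕ → Ω → S}

lemma integrable_inner_sum_comp_add (hZ : ∀ t, Measurable (Z t)) (h f : S → E) (s T : ℕ) :
    Integrable (fun ω => ⟪h (Z s ω), ∑ k ∈ range T, f (Z (s + k) ω)⟫) μ := by
  simp only [inner_sum]
  exact integrable_finsetSum _ fun k _ =>
    (Integrable.of_finite (f := fun p : S × S => ⟪h p.1, f p.2⟫)).comp_measurable
      ((hZ s).prodMk (hZ (s + k)))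

variable [DecidableEq S] [CompleteSpace E]

theorem condExp_comp_add_pow (hadapted : ∀ t, Measurable[F t] (Z t))
    (hmarkov : ∀ t (f : S → E), μ[f ∘ Z (t + 1) | F t] =ᵐ[μ] transitionOp P f ∘ Z t)
    (s k : ℕ) (f : S → E) :
    μ[f ∘ Z (s + k) | F s] =ᵐ[μ] transitionOp (P ^ k) f ∘ Z s := by
  induction k generalizing f with
  | zero =>
    rw [pow_zero, transitionOp_one]
    exact .of_eq <| condExp_of_stronglyMeasurable (F.le s)
      (StronglyMeasurable.of_discrete.comp_measurable (hadapted s))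
      (Integrable.of_finite.comp_measurable ((hadapted s).mono (F.le s) le_rfl))
  | succ k ih =>
    calc μ[f ∘ Z (s + (k + 1)) | F s]
        =ᵐ[μ] μ[μ[f ∘ Z (s + k + 1) | F (s + k)] | F s] :=
          (condExp_condExp_of_le (F.mono (Nat.le_add_right s k)) (F.le (s + k))).symm
      _ =ᵐ[μ] μ[transitionOp P f ∘ Z (s + k) | F s] := condExp_congr_ae (hmarkov (s + k) f)
      _ =ᵐ[μ] transitionOp (P ^ k) (transitionOp P f) ∘ Z s := ih _
      _ = transitionOp (P ^ (k + 1)) f ∘ Z s := by rw [pow_succ, transitionOp_mul]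

theorem integral_inner_sum_comp_add (hadapted : ∀ t, Measurable[F t] (Z t))
    (hmarkov : ∀ t (f : S → E), μ[f ∘ Z (t + 1) | F t] =ᵐ[μ] transitionOp P f ∘ Z t)
    (h f : S → E) (s T : ℕ) :
    ∫ ω, ⟪h (Z s ω), ∑ k ∈ range T, f (Z (s + k) ω)⟫ ∂μ
      = ∫ ω, ⟪h (Z s ω), ∑ k ∈ range T, transitionOp (P ^ k) f (Z s ω)⟫ ∂μ := by
  have hZ : ∀ t, Measurable (Z t) := fun t => (hadapted t).mono (F.le t) le_rfl
  have hcomp : ∀ k, Integrable (f ∘ Z (s + k)) μ := fun k =>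
    Integrable.of_finite.comp_measurable (hZ (s + k))
  rw [integral_inner_condExp (X := fun ω => h (Z s ω)) (F.le s)
    (StronglyMeasurable.of_discrete.comp_measurable (hadapted s))
    (integrable_inner_sum_comp_add hZ h f s T) (integrable_finsetSum _ fun k _ => hcomp k)]
  have hfun : (fun ω => ∑ k ∈ range T, f (Z (s + k) ω)) = ∑ k ∈ range T, f ∘ Z (s + k) :=
    (sum_fn _ _).symm
  refine integral_congr_ae ?_
  filter_upwards [condExp_finsetSum (s := range T) (fun k _ => hcomp k) (F s),
    ae_all_iff.mpr fun k => condExp_comp_add_pow hadapted hmarkov s k f] with ω hsum hpow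
  rw [hfun, hsum, Finset.sum_apply]
  simp only [hpow, Function.comp_apply]

theorem integral_norm_sum_sq_le [IsProbabilityMeasure μ] (hadapted : ∀ t, Measurable[F t] (Z t))
    (hmarkov : ∀ t (f : S → E), μ[f ∘ Z (t + 1) | F t] =ᵐ[μ] transitionOp P f ∘ Z t)
    {π : S → ℝ} {g : S → E} {σ C : ℝ} (hmean : ∑ u, π u • g u = 0) (hg : ∀ u, ‖g u‖ ≤ σ)
    (hTV : ∀ z T, ∑ t ∈ range T, (1 / 2 : ℝ) * ∑ u, |(P ^ t) z u - π u| ≤ C) (N : ℕ) :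
    ∫ ω, ‖∑ t ∈ range N, g (Z t ω)‖ ^ 2 ∂μ ≤ 8 * σ ^ 2 * C ^ 2 * N := by
  have hZ : ∀ t, Measurable (Z t) := fun t => (hadapted t).mono (F.le t) le_rfl
  have hdiag : ∀ s T, ∫ ω, ⟪g (Z s ω), ∑ k ∈ range T, transitionOp (P ^ k) g (Z s ω)⟫ ∂μ
      ≤ (2 * σ * C) ^ 2 := fun s T => by
    simpa using integral_mono
      ((Integrable.of_finite (μ := μ.map (Z s))
        (f := fun z => ⟪g z, ∑ k ∈ range T, transitionOp (P ^ k) g z⟫)).comp_measurable (hZ s))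
      (integrable_const ((2 * σ * C) ^ 2))
      fun ω => inner_sum_transitionOp_pow_le hmean hg (hTV (Z s ω)) T
  calc ∫ ω, ‖∑ t ∈ range N, g (Z t ω)‖ ^ 2 ∂μ
      ≤ ∫ ω, 2 * ∑ s ∈ range N, ⟪g (Z s ω), ∑ k ∈ range (N - s), g (Z (s + k) ω)⟫ ∂μ :=
        integral_mono_of_nonneg (.of_forall fun ω => by positivity)
          ((integrable_finsetSum _ fun s _ =>
            integrable_inner_sum_comp_add hZ g g s (N - s)).const_mul 2)
          (.of_forall fun ω => norm_sum_range_sq_le (fun t => g (Z t ω)) N)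
    _ = 2 * ∑ s ∈ range N,
          ∫ ω, ⟪g (Z s ω), ∑ k ∈ range (N - s), transitionOp (P ^ k) g (Z s ω)⟫ ∂μ := by
        rw [integral_const_mul, integral_finsetSum _ fun s _ =>
          integrable_inner_sum_comp_add hZ g g s (N - s)]
        simp only [integral_inner_sum_comp_add hadapted hmarkov]
    _ ≤ 2 * ∑ s ∈ range N, (2 * σ * C) ^ 2 := by
        gcongr with s
        exact hdiag s (N - s)
    _ = 8 * σ ^ 2 * C ^ 2 * N := by
        rw [sum_const, card_range, nsmul_eq_mul]
        ring

end MarkovChain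

theorem stmt_5_general {d : ℕ} {S : Type*} [Fintype S] [DecidableEq S] [MeasurableSpace S]
    [MeasurableSingletonClass S]
    {Ω : Type*} {m : MeasurableSpace Ω} (μ : Measure Ω) [IsProbabilityMeasure μ]
    (P : Matrix S S ℝ)
    (dZ : S → ℝ)
    (F : Filtration ℕ m) (Z : ℕ → Ω → S)
    (hadapted : ∀ t, Measurable[F t] (Z t))
    (hmarkov : ∀ (t : ℕ) (f : S → EuclideanSpace ℝ (Fin d)),
      μ[(fun ω => f (Z (t+1) ω)) | F t] =ᵐ[μ] fun ω => ∑ u, P (Z t ω) u • f u)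
    (g : S → EuclideanSpace ℝ (Fin d)) (σ C₁ : ℝ)
    (hmean : ∑ z, dZ z • g z = 0) (hgb : ∀ z, ‖g z‖ ≤ σ)
    (hTV : ∀ z (T : ℕ),
      ∑ t ∈ Finset.range T, (1/2 : ℝ) * ∑ u, |(P ^ t) z u - dZ u| ≤ C₁)
    (N : ℕ) (hN : 1 ≤ N) :
    ∫ ω, ‖(N:ℝ)⁻¹ • ∑ t ∈ Finset.range N, g (Z t ω)‖^2 ∂μ
      ≤ 16 * C₁^2 * σ^2 / N := by
  have hN' : (N : ℝ) ≠ 0 := Nat.cast_ne_zero.mpr (Nat.one_le_iff_ne_zero.mp hN)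
  calc ∫ ω, ‖(N:ℝ)⁻¹ • ∑ t ∈ range N, g (Z t ω)‖ ^ 2 ∂μ
      = (N:ℝ)⁻¹ ^ 2 * ∫ ω, ‖∑ t ∈ range N, g (Z t ω)‖ ^ 2 ∂μ := by
        simp only [norm_smul, mul_pow, integral_const_mul, norm_inv, RCLike.norm_natCast]
    _ ≤ (N:ℝ)⁻¹ ^ 2 * (8 * σ ^ 2 * C₁ ^ 2 * N) := by
        gcongr
        exact integral_norm_sum_sq_le hadapted hmarkov hmean hgb hTV N
    _ = 8 * (C₁ ^ 2 * σ ^ 2) / N := by field_simp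
    _ ≤ 16 * C₁ ^ 2 * σ ^ 2 / N := by
        rw [mul_assoc 16]
        gcongr
        norm_num

/-- MSE of the Markovian sample average for a unichain-type
chain: if g is mean-zero and bounded by σ and cumulative TV deviation is
bounded by C₁, then E‖(1/N)∑_{t<N} g(Z_t)‖² ≤ 16C₁²σ²/N. -/
theorem stmt_5 {d : ℕ} {S : Type*} [Fintype S] [DecidableEq S] [MeasurableSpace S]
    [MeasurableSingletonClass S]
    {Ω : Type*} {m : MeasurableSpace Ω} (μ : Measure Ω) [IsProbabilityMeasure μ]
    (P : Matrix S S ℝ) (hP : ∀ z, (∀ u, 0 ≤ P z u) ∧ ∑ u, P z u = 1)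
    (dZ : S → ℝ) (hd : (∀ z, 0 ≤ dZ z) ∧ ∑ z, dZ z = 1)
    (hstat : ∀ u, ∑ z, dZ z * P z u = dZ u)
    (F : Filtration ℕ m) (Z : ℕ → Ω → S)
    (hadapted : ∀ t, Measurable[F t] (Z t))
    (hmarkov : ∀ (t : ℕ) (f : S → EuclideanSpace ℝ (Fin d)),
      μ[(fun ω => f (Z (t+1) ω)) | F t] =ᵐ[μ] fun ω => ∑ u, P (Z t ω) u • f u)
    (g : S → EuclideanSpace ℝ (Fin d)) (σ C₁ : ℝ) (hσ : 0 ≤ σ) (hC : 0 < C₁)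
    (hmean : ∑ z, dZ z • g z = 0) (hgb : ∀ z, ‖g z‖ ≤ σ)
    (hTV : ∀ z (T : ℕ),
      ∑ t ∈ Finset.range T, (1/2 : ℝ) * ∑ u, |(P ^ t) z u - dZ u| ≤ C₁)
    (N : ℕ) (hN : 1 ≤ N) :
    ∫ ω, ‖(N:ℝ)⁻¹ • ∑ t ∈ Finset.range N, g (Z t ω)‖^2 ∂μ
      ≤ 16 * C₁^2 * σ^2 / N :=
  stmt_5_general μ P dZ F Z hadapted hmarkov g σ C₁ hmean hgb hTV N hN
end

section
/- Let g^j for j ≥ 0 be random vectors in R^d with E‖μ − g^j‖² ≤ V/2^j for all j and some constant V > 0, where μ ∈ R^d is fixed. Let Q ~ Geom(1/2) be independent, T_max ≥ 2, and define g_MLMC = g^0 + 𝟙{2^Q ≤ T_max}·2^Q(g^Q − g^{Q−1}). Then E‖μ − g_MLMC‖² ≤ 2V + 4∑_{j=1}^{⌊log₂ T_max⌋} 2^j·(V/2^j + V/2^{j−1}) ≤ 14V(1 + ⌊log₂ T_max⌋), i.e., E‖μ − g_MLMC‖² = O(V log₂ T_max). -/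
open MeasureTheory Finset

/-! Write `e j = μ − g^j`. For the level-`j` correction,
`‖e 0 − 2^j (e (j−1) − e j)‖² ≤ 2‖e 0‖² + 4·4^j (‖e j‖² + ‖e (j−1)‖²)`, whose expectation is at most
`2V + 12·2^j V`. Weighted by `Pr[Q = j] = 2^{-j}`, the `2V` part sums to `2V` over all `j ≥ 1`,
while each of the `⌊log₂ T_max⌋` levels with `2^j ≤ T_max` contributes at most `12V`; the other
levels contribute only the `2V` part because their correction is switched off. -/

theorem tsum_le_of_le_geometric_add_indicator {f b : ℕ → ℝ} {c : ℝ} {s : Finset ℕ}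
    (hf : ∀ n, 0 ≤ f n) (hle : ∀ n, f n ≤ c * (1 / 2) ^ n + (s : Set ℕ).indicator b n) :
    ∑' n, f n ≤ 2 * c + ∑ n ∈ s, b n := by
  have hgeom : Summable fun n : ℕ => c * (1 / 2 : ℝ) ^ n := summable_geometric_two.mul_left c
  have hind : ∀ n ∉ s, (s : Set ℕ).indicator b n = 0 := fun n hn =>
    Set.indicator_of_notMem (by simpa using hn) b
  have hsum := hgeom.add (summable_of_ne_finset_zero hind)
  calc ∑' n, f n ≤ ∑' n, (c * (1 / 2) ^ n + (s : Set ℕ).indicator b n) :=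
        (hsum.of_nonneg_of_le hf hle).tsum_le_tsum hle hsum
    _ = 2 * c + ∑ n ∈ s, b n := by
        rw [hgeom.tsum_add (summable_of_ne_finset_zero hind), tsum_mul_left, tsum_geometric_two,
          tsum_eq_sum hind, sum_indicator_subset b subset_rfl, mul_comm]

theorem norm_add_sq_le_two_mul {E : Type*} [SeminormedAddCommGroup E] (x y : E) :
    ‖x + y‖ ^ 2 ≤ 2 * (‖x‖ ^ 2 + ‖y‖ ^ 2) :=
  (pow_le_pow_left₀ (norm_nonneg _) (norm_add_le x y) 2).trans add_sq_le

theorem norm_sub_add_smul_sub_sq_le {E : Type*} [SeminormedAddCommGroup E] [NormedSpace ℝ E]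
    (m x y z : E) (c : ℝ) :
    ‖m - (x + c • (y - z))‖ ^ 2 ≤ 2 * ‖m - x‖ ^ 2 + 4 * c ^ 2 * (‖m - y‖ ^ 2 + ‖m - z‖ ^ 2) := by
  have hsplit : m - (x + c • (y - z)) = (m - x) + c • ((m - y) - (m - z)) := by
    rw [sub_sub_sub_cancel_left, smul_sub, smul_sub]; abel
  have hdiff := norm_add_sq_le_two_mul (m - y) (-(m - z))
  rw [← sub_eq_add_neg, norm_neg] at hdiff
  calc ‖m - (x + c • (y - z))‖ ^ 2
      ≤ 2 * (‖m - x‖ ^ 2 + c ^ 2 * ‖(m - y) - (m - z)‖ ^ 2) := by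
        rw [hsplit, ← sq_abs c, ← Real.norm_eq_abs, ← mul_pow, ← norm_smul]
        exact norm_add_sq_le_two_mul _ _
    _ ≤ 2 * ‖m - x‖ ^ 2 + 4 * c ^ 2 * (‖m - y‖ ^ 2 + ‖m - z‖ ^ 2) := by
        nlinarith [sq_nonneg c]

theorem integral_norm_sub_add_smul_sub_sq_le {Ω E : Type*} [MeasurableSpace Ω] {μ : Measure Ω}
    [SeminormedAddCommGroup E] [NormedSpace ℝ E] (m : E) {x y z : Ω → E} (c : ℝ)
    (hx : Integrable (fun ω => ‖m - x ω‖ ^ 2) μ) (hy : Integrable (fun ω => ‖m - y ω‖ ^ 2) μ)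
    (hz : Integrable (fun ω => ‖m - z ω‖ ^ 2) μ) :
    ∫ ω, ‖m - (x ω + c • (y ω - z ω))‖ ^ 2 ∂μ ≤
      2 * ∫ ω, ‖m - x ω‖ ^ 2 ∂μ + 4 * c ^ 2 * (∫ ω, ‖m - y ω‖ ^ 2 ∂μ + ∫ ω, ‖m - z ω‖ ^ 2 ∂μ) := by
  have hyz : Integrable (fun ω => 4 * c ^ 2 * (‖m - y ω‖ ^ 2 + ‖m - z ω‖ ^ 2)) μ :=
    (hy.add hz).const_mul _
  calc ∫ ω, ‖m - (x ω + c • (y ω - z ω))‖ ^ 2 ∂μ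
      ≤ ∫ ω, (2 * ‖m - x ω‖ ^ 2 + 4 * c ^ 2 * (‖m - y ω‖ ^ 2 + ‖m - z ω‖ ^ 2)) ∂μ :=
        integral_mono_of_nonneg (.of_forall fun _ => by positivity) ((hx.const_mul 2).add hyz)
          (.of_forall fun ω => norm_sub_add_smul_sub_sq_le m (x ω) (y ω) (z ω) c)
    _ = _ := by
        rw [integral_add (hx.const_mul 2) hyz, integral_const_mul, integral_const_mul,
          integral_add hy hz]

theorem sum_Icc_two_pow_mul_div_add_div (V : ℝ) (L : ℕ) :
    ∑ j ∈ Icc 1 L, (2 : ℝ) ^ j * (V / 2 ^ j + V / 2 ^ (j - 1)) = 3 * V * L := by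
  have hterm : ∀ j ∈ Icc 1 L, (2 : ℝ) ^ j * (V / 2 ^ j + V / 2 ^ (j - 1)) = 3 * V := by
    intro j hj
    obtain ⟨k, rfl⟩ := Nat.exists_eq_add_of_le' (mem_Icc.mp hj).1
    rw [Nat.add_sub_cancel]
    field_simp
    ring
  rw [sum_congr rfl hterm, sum_const, Nat.card_Icc, nsmul_eq_mul, Nat.add_sub_cancel]
  ring

theorem nonneg_of_integral_norm_sub_sq_le {Ω E : Type*} [MeasurableSpace Ω] {μ : Measure Ω}
    [SeminormedAddCommGroup E] {g : ℕ → Ω → E} {m : E} {V : ℝ}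
    (hmse : ∀ j, ∫ ω, ‖m - g j ω‖ ^ 2 ∂μ ≤ V / 2 ^ j) : 0 ≤ V := by
  simpa using (integral_nonneg fun ω => by positivity).trans (hmse 0)

section MLMC

variable {Ω E : Type*} [MeasurableSpace Ω] {μ : Measure Ω} [SeminormedAddCommGroup E]
  [NormedSpace ℝ E] {g : ℕ → Ω → E} {m : E} {V : ℝ}

theorem integral_norm_sub_mlmc_level_le (hint : ∀ j, Integrable (fun ω => ‖m - g j ω‖ ^ 2) μ)
    (hmse : ∀ j, ∫ ω, ‖m - g j ω‖ ^ 2 ∂μ ≤ V / 2 ^ j) (n : ℕ) :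
    ∫ ω, ‖m - (g 0 ω + (2 : ℝ) ^ (n + 1) • (g (n + 1) ω - g n ω))‖ ^ 2 ∂μ ≤
      2 * V + 12 * 2 ^ (n + 1) * V := by
  have h0 := hmse 0
  have h1 := hmse (n + 1)
  have h2 := hmse n
  rw [pow_zero, div_one] at h0
  calc _ ≤ _ := integral_norm_sub_add_smul_sub_sq_le m _ (hint 0) (hint (n + 1)) (hint n)
    _ ≤ 2 * V + 4 * ((2 : ℝ) ^ (n + 1)) ^ 2 * (V / 2 ^ (n + 1) + V / 2 ^ n) := by gcongr
    _ = 2 * V + 12 * 2 ^ (n + 1) * V := by field_simp; ring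

theorem mlmc_term_le (hint : ∀ j, Integrable (fun ω => ‖m - g j ω‖ ^ 2) μ)
    (hmse : ∀ j, ∫ ω, ‖m - g j ω‖ ^ 2 ∂μ ≤ V / 2 ^ j) (T n : ℕ) :
    (1 / 2 : ℝ) ^ (n + 1) * ∫ ω, ‖m - (g 0 ω +
        if 2 ^ (n + 1) ≤ T then (2 : ℝ) ^ (n + 1) • (g (n + 1) ω - g n ω) else 0)‖ ^ 2 ∂μ ≤
      V * (1 / 2) ^ n + (range (Nat.log 2 T) : Set ℕ).indicator (fun _ => 12 * V) n := by
  have hV := nonneg_of_integral_norm_sub_sq_le hmse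
  split_ifs with hT
  · have hn : n ∈ range (Nat.log 2 T) := mem_range.mpr (Nat.le_log_of_pow_le one_lt_two hT)
    rw [Set.indicator_of_mem (mem_coe.mpr hn)]
    calc _ ≤ (1 / 2 : ℝ) ^ (n + 1) * (2 * V + 12 * 2 ^ (n + 1) * V) :=
          mul_le_mul_of_nonneg_left (integral_norm_sub_mlmc_level_le hint hmse n) (by positivity)
      _ = V * (1 / 2) ^ n + 12 * V := by
          have hcancel : (1 / 2 : ℝ) ^ (n + 1) * 2 ^ (n + 1) = 1 := by rw [← mul_pow]; norm_num
          linear_combination 12 * V * hcancel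
  · have h0 := hmse 0
    rw [pow_zero, div_one] at h0
    simp only [add_zero]
    calc _ ≤ (1 / 2 : ℝ) ^ (n + 1) * (2 * V) := by gcongr; linarith
      _ = V * (1 / 2) ^ n := by ring
      _ ≤ _ := le_add_of_nonneg_right (Set.indicator_nonneg (fun _ _ => by positivity) _)

end MLMC

theorem stmt_6_general {d : ℕ} {Ω : Type*} [MeasurableSpace Ω] (μ : Measure Ω)
    (g : ℕ → Ω → EuclideanSpace ℝ (Fin d)) (μ0 : EuclideanSpace ℝ (Fin d))
    (V : ℝ) (Tmax : ℕ)
    (hint : ∀ j, Integrable (fun ω => ‖μ0 - g j ω‖^2) μ)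
    (hmse : ∀ j, ∫ ω, ‖μ0 - g j ω‖^2 ∂μ ≤ V / 2^j) :
    (∑' j : ℕ, if 1 ≤ j then ((1:ℝ)/2)^j *
        ∫ ω, ‖μ0 - (g 0 ω +
          (if 2^j ≤ Tmax then ((2:ℝ)^j) • (g j ω - g (j-1) ω) else 0))‖^2 ∂μ
      else 0)
      ≤ 2*V + 4 * ∑ j ∈ Finset.Icc 1 (Nat.log 2 Tmax),
          (2:ℝ)^j * (V/2^j + V/2^(j-1)) ∧
    2*V + 4 * ∑ j ∈ Finset.Icc 1 (Nat.log 2 Tmax),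
        (2:ℝ)^j * (V/2^j + V/2^(j-1))
      ≤ 14 * V * (1 + (Nat.log 2 Tmax : ℝ)) := by
  have hV := nonneg_of_integral_norm_sub_sq_le hmse
  rw [sum_Icc_two_pow_mul_div_add_div]
  refine ⟨?_, by nlinarith [mul_nonneg hV (Nat.cast_nonneg (α := ℝ) (Nat.log 2 Tmax))]⟩
  rw [← Nat.succ_injective.tsum_eq fun j hj =>
    ⟨j - 1, Nat.succ_pred_eq_of_ne_zero (by rintro rfl; simp at hj)⟩]
  simp only [Nat.succ_eq_add_one, le_add_iff_nonneg_left, zero_le, if_true, Nat.add_sub_cancel]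
  calc _ ≤ 2 * V + ∑ _ ∈ range (Nat.log 2 Tmax), 12 * V :=
        tsum_le_of_le_geometric_add_indicator (fun n => by positivity) (mlmc_term_le hint hmse Tmax)
    _ = _ := by rw [sum_const, card_range, nsmul_eq_mul]; ring

/-- second-moment bound for the MLMC estimator. With Q geometric
(Pr[Q=j] = 2^{-j}) independent of the levels, E‖μ − g_MLMC‖² is bounded by
2V + 4∑_{j=1}^{⌊log₂T_max⌋} 2^j (V/2^j + V/2^{j−1}) ≤ 14V(1+⌊log₂T_max⌋). -/
theorem stmt_6 {d : ℕ} {Ω : Type*} [MeasurableSpace Ω] (μ : Measure Ω)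
    [IsProbabilityMeasure μ]
    (g : ℕ → Ω → EuclideanSpace ℝ (Fin d)) (μ0 : EuclideanSpace ℝ (Fin d))
    (V : ℝ) (hV : 0 < V) (Tmax : ℕ) (hT : 2 ≤ Tmax)
    (hint : ∀ j, Integrable (fun ω => ‖μ0 - g j ω‖^2) μ)
    (hmse : ∀ j, ∫ ω, ‖μ0 - g j ω‖^2 ∂μ ≤ V / 2^j) :
    (∑' j : ℕ, if 1 ≤ j then ((1:ℝ)/2)^j *
        ∫ ω, ‖μ0 - (g 0 ω +
          (if 2^j ≤ Tmax then ((2:ℝ)^j) • (g j ω - g (j-1) ω) else 0))‖^2 ∂μ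
      else 0)
      ≤ 2*V + 4 * ∑ j ∈ Finset.Icc 1 (Nat.log 2 Tmax),
          (2:ℝ)^j * (V/2^j + V/2^(j-1)) ∧
    2*V + 4 * ∑ j ∈ Finset.Icc 1 (Nat.log 2 Tmax),
        (2:ℝ)^j * (V/2^j + V/2^(j-1))
      ≤ 14 * V * (1 + (Nat.log 2 Tmax : ℝ)) :=
  stmt_6_general μ g μ0 V Tmax hint hmse
end

section
/- Let A ∈ R^{(1+m)×(1+m)} be a block matrix of the form A = [[c, 0ᵀ], [b, M]] with c ∈ R, b ∈ R^m with ‖b‖ ≤ 1, and M ∈ R^{m×m}. Suppose there is λ ∈ (0,1] such that ζᵀMζ ≥ λ‖ζ‖² for all ζ in a subspace W ⊆ R^m. If c ≥ λ + √(1/λ² − 1), then for every ξ = (η, ζ) with ζ ∈ W, one has ξᵀAξ ≥ (λ/2)‖ξ‖². -/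
open scoped BigOperators RealInnerProductSpace

/-- subspace positive definiteness of the block critic matrix
A = [[c, 0ᵀ],[b, M]]: its quadratic form ξᵀAξ = cη² + η⟪b,ζ⟫ + ζᵀMζ is at
least (λ/2)‖ξ‖² on {(η,ζ) : ζ ∈ W} provided c ≥ λ + √(1/λ² − 1). -/
theorem stmt_7 {m : ℕ} (c lam : ℝ) (hlam : lam ∈ Set.Ioc (0:ℝ) 1)
    (b : EuclideanSpace ℝ (Fin m)) (hb : ‖b‖ ≤ 1)
    (M : EuclideanSpace ℝ (Fin m) →ₗ[ℝ] EuclideanSpace ℝ (Fin m))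
    (W : Submodule ℝ (EuclideanSpace ℝ (Fin m)))
    (hM : ∀ ζ ∈ W, lam * ‖ζ‖^2 ≤ ⟪ζ, M ζ⟫)
    (hc : lam + Real.sqrt (1/lam^2 - 1) ≤ c) :
    ∀ (η : ℝ) (ζ : EuclideanSpace ℝ (Fin m)), ζ ∈ W →
      (lam/2) * (η^2 + ‖ζ‖^2) ≤ c * η^2 + η * ⟪b, ζ⟫ + ⟪ζ, M ζ⟫ := by
  obtain ⟨hl0, hl1⟩ := hlam
  set s := Real.sqrt (1/lam^2 - 1) with hs
  have hs0 : 0 ≤ s := Real.sqrt_nonneg _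
  have harg : (0:ℝ) ≤ 1/lam^2 - 1 := by
    have : lam^2 ≤ 1 := by nlinarith
    have h2 : 0 < lam^2 := by positivity
    rw [sub_nonneg, le_div_iff₀ h2]; linarith
  have hs2 : s^2 = 1/lam^2 - 1 := Real.sq_sqrt harg
  have hls : lam^2 * s^2 = 1 - lam^2 := by
    field_simp at hs2 ⊢
    nlinarith [hs2]
  have hkey : 1 + lam^2 ≤ 2*lam*c := by
    have hls1 : lam * s ≤ 1 := by nlinarith [sq_nonneg (lam*s - 1), sq_nonneg lam]
    have h2 : 0 ≤ lam*s*(2 - lam*s) := mul_nonneg (mul_nonneg hl0.le hs0) (by linarith)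
    have h3 : 2*lam*s ≥ 1 - lam^2 := by nlinarith [hls]
    nlinarith [mul_le_mul_of_nonneg_left hc (le_of_lt hl0)]
  intro η ζ hζ
  have hMζ := hM ζ hζ
  have hinner : -( |η| * ‖ζ‖ ) ≤ η * ⟪b, ζ⟫ := by
    have h1 : |η * ⟪b, ζ⟫| ≤ |η| * ‖ζ‖ := by
      rw [abs_mul]
      have := abs_real_inner_le_norm b ζ
      have : |⟪b, ζ⟫| ≤ ‖ζ‖ := le_trans this (by nlinarith [norm_nonneg ζ])
      exact mul_le_mul_of_nonneg_left this (abs_nonneg η)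
    linarith [neg_abs_le (η * ⟪b, ζ⟫)]
  have habs : |η|^2 = η^2 := sq_abs η
  nlinarith [sq_nonneg (|η| - lam*‖ζ‖), norm_nonneg ζ, abs_nonneg η, sq_nonneg η]
end
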